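/- Let L = ½∂_{xx} + ∂_z on ℝ², and for a smooth function β : ℝ → ℝ define Y = (½β'(z)x)∂_x + β(z)∂_z, τ(x,z) = β'(z), H(x,z) = -½β''(z)x, with σ = (1,0)ᵀ. Then (Y, τ, H) satisfies the determining equations of a symmetry of Brownian motion: Y(μ) - L(Y) - σH + τμ = 0 componentwise (with μ = (0,1)ᵀ) and [Y, σ·∂_x] + ½τσ·∂_x = 0 as vector fields. -/

import Mathlib

/-- `∂_x` for functions of `(x,z)`. -/
noncomputable def dX (f : ℝ → ℝ → ℝ) (x z : ℝ) : ℝ := deriv (fun x' => f x' z) x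

/-- `∂_z` for functions of `(x,z)`. -/
noncomputable def dZ (f : ℝ → ℝ → ℝ) (x z : ℝ) : ℝ := deriv (fun z' => f x z') z

/-- The generator `L = ½∂_{xx} + ∂_z` of the system `(dX = dW, dZ = dt)`. -/
noncomputable def Lbm (f : ℝ → ℝ → ℝ) (x z : ℝ) : ℝ :=
  (1 / 2) * dX (fun x' z' => dX f x' z') x z + dZ f x z

/-- Directional derivative along the vector field `Y = Y₁∂_x + Y₂∂_z`. -/
noncomputable def Yop (Y₁ Y₂ f : ℝ → ℝ → ℝ) (x z : ℝ) : ℝ :=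
  Y₁ x z * dX f x z + Y₂ x z * dZ f x z

/-- for `L = ½∂_{xx} + ∂_z`, `Y = (½β'(z)x)∂_x + β(z)∂_z`,
`τ = β'(z)`, `H = -½β''(z)x`, `μ = (0,1)ᵀ`, `σ = (1,0)ᵀ`, the triple `(Y,τ,H)`
satisfies the determining equations of a symmetry of Brownian motion:
`Y(μ) - L(Y) - σH + τμ = 0` componentwise and `[Y, σ·∂_x] + ½τσ·∂_x = 0`
as vector fields. -/
theorem stmt_8 (β : ℝ → ℝ) (hβ : ContDiff ℝ (⊤ : ℕ∞) β) :
    let Y₁ : ℝ → ℝ → ℝ := fun x z => (1 / 2) * deriv β z * x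
    let Y₂ : ℝ → ℝ → ℝ := fun _ z => β z
    let τ : ℝ → ℝ := fun z => deriv β z
    let H : ℝ → ℝ → ℝ := fun x z => -(1 / 2) * deriv (deriv β) z * x
    ∀ x z : ℝ,
      -- first component of `Y(μ) - L(Y) - σH + τμ = 0` (with `μ¹ = 0`, `σ¹ = 1`)
      (Yop Y₁ Y₂ (fun _ _ => 0) x z - Lbm Y₁ x z - 1 * H x z + τ z * 0 = 0) ∧
      -- second component (with `μ² = 1`, `σ² = 0`)
      (Yop Y₁ Y₂ (fun _ _ => 1) x z - Lbm Y₂ x z - 0 * H x z + τ z * 1 = 0) ∧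
      -- first component of `[Y, σ·∂_x] + ½τσ·∂_x = 0`
      (Yop Y₁ Y₂ (fun _ _ => 1) x z - dX Y₁ x z + (1 / 2) * τ z * 1 = 0) ∧
      -- second component of `[Y, σ·∂_x] + ½τσ·∂_x = 0`
      (Yop Y₁ Y₂ (fun _ _ => 0) x z - dX Y₂ x z + (1 / 2) * τ z * 0 = 0) := by
  intro Y₁ Y₂ τ H x z
  have hbt : ContDiff ℝ ((⊤:ℕ∞):WithTop ℕ∞) β := hβ.of_le (by simp)
  have hβ' := (contDiff_infty_iff_deriv.mp hbt).2
  have hdβ' : ∀ t, DifferentiableAt ℝ (deriv β) t := fun t => hβ'.differentiable (by simp) t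
  have e1 : ∀ x z : ℝ, deriv (fun x' => Y₁ x' z) x = (1/2) * deriv β z := by
    intro x z; simp [Y₁, mul_comm]
  have e2 : ∀ x z : ℝ, deriv (fun z' => Y₁ x z') z = (1/2) * deriv (deriv β) z * x := by
    intro x z
    have hfe : (fun z' => Y₁ x z') = fun z' => (1/2 * x) * deriv β z' := by
      funext z'; simp [Y₁]; ring
    rw [hfe, deriv_const_mul _ (hdβ' z)]; ring
  have e3 : ∀ x z : ℝ, deriv (fun x' => Y₂ x' z) x = 0 := by intro x z; simp [Y₂]
  have e4 : ∀ x z : ℝ, deriv (fun z' => Y₂ x z') z = deriv β z := by intro x z; simp [Y₂]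
  have e5 : deriv (fun x' => deriv (fun x'' => Y₁ x'' z) x') x = 0 := by
    rw [show (fun x' => deriv (fun x'' => Y₁ x'' z) x') = fun _ => (1/2) * deriv β z from
      funext fun x' => e1 x' z]
    simp
  have e6 : deriv (fun x' => deriv (fun x'' => Y₂ x'' z) x') x = 0 := by
    rw [show (fun x' => deriv (fun x'' => Y₂ x'' z) x') = fun _ => (0:ℝ) from
      funext fun x' => e3 x' z]
    simp
  refine ⟨?_, ?_, ?_, ?_⟩
  · simp only [Yop, Lbm, dX, dZ, deriv_const]
    rw [e5, e2 x z]
    simp only [H, τ]; ring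
  · simp only [Yop, Lbm, dX, dZ, deriv_const]
    rw [e4 x z, e6]
    simp only [τ]; ring
  · simp only [Yop, dX, dZ, deriv_const]
    rw [e1 x z]
    simp only [τ]; ring
  · simp only [Yop, dX, dZ, deriv_const]
    rw [e3 x z]
    simp only [τ]; ring
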